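/- arXiv:1909.07127 — 3 statements merged into one kernel-verified Lean document; each statement's English description precedes it below -/
import Mathlib

section
/- Let R be a commutative ring, W an R-module, Λ(W) the exterior algebra of W, Γ the grade involution of Λ(W) (the algebra automorphism with Γ(w) = −w for w ∈ W), ι_φ the left contraction of Λ(W) by a dual element φ ∈ W* , and w∧ left exterior multiplication by w ∈ W. For a quadruple a = (φ, f, w, g) with φ ∈ W*, w ∈ W, f, g ∈ R, define the R-linear operator c(a) on Λ(W) ⊕ Λ(W) by c(a)(ω₁, ω₀) = (ι_φ ω₁ + w∧ω₁ + f·Γω₀ , ι_φ ω₀ + w∧ω₀ + g·Γω₁), and define T : Λ(W) ⊕ Λ(W) → Λ(W) ⊕ Λ(W) by T(ω₁, ω₀) = (Γω₀, −Γω₁). Then for all φ ∈ W*, w ∈ W, f, g ∈ R and all (ω₁, ω₀) ∈ Λ(W) ⊕ Λ(W), one has T(c(φ, f, w, g)(ω₁, ω₀)) = −c(φ, g, w, f)(T(ω₁, ω₀)). In other words, T intertwines the Clifford action of a = (φ, f, w, g) with that of its T-dual μ(a) = −(φ, g, w, f). -/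
open ExteriorAlgebra

/-- The Clifford action of a quadruple `(φ, f, w, g)` on pairs of exterior-algebra
elements `(ω₁, ω₀)`:
`c(φ,f,w,g)(ω₁,ω₀) = (ι_φ ω₁ + w∧ω₁ + f·Γω₀ , ι_φ ω₀ + w∧ω₀ + g·Γω₁)`. -/
noncomputable def cliffordAction {R : Type*} [CommRing R] {W : Type*} [AddCommGroup W]
    [Module R W] (φ : Module.Dual R W) (f : R) (w : W) (g : R)
    (x : ExteriorAlgebra R W × ExteriorAlgebra R W) :
    ExteriorAlgebra R W × ExteriorAlgebra R W :=
  (CliffordAlgebra.contractLeft φ x.1 + ι R w * x.1 + f • CliffordAlgebra.involute x.2,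
   CliffordAlgebra.contractLeft φ x.2 + ι R w * x.2 + g • CliffordAlgebra.involute x.1)

/-- The Fourier–Mukai-type transform `T(ω₁, ω₀) = (Γω₀, −Γω₁)`. -/
noncomputable def fmTransform {R : Type*} [CommRing R] {W : Type*} [AddCommGroup W]
    [Module R W] (x : ExteriorAlgebra R W × ExteriorAlgebra R W) :
    ExteriorAlgebra R W × ExteriorAlgebra R W :=
  (CliffordAlgebra.involute x.2, -CliffordAlgebra.involute x.1)

/-! The grade involution `Γ` squares to the identity and anticommutes with the odd operators
`ι_φ` and `w∧`. Applying `Γ` to a component of `c(φ, f, w, g)(ω₁, ω₀)` therefore flips the sign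
of its odd part and turns `f • Γω₀`, `g • Γω₁` into `f • ω₀`, `g • ω₁`, which is
`-c(φ, g, w, f)(Γω₀, -Γω₁)` read componentwise. -/

namespace CliffordAlgebra

variable {R : Type*} [CommRing R] {M : Type*} [AddCommGroup M] [Module R M]
  {Q : QuadraticForm R M}

theorem involute_ι_mul (m : M) (x : CliffordAlgebra Q) :
    involute (ι Q m * x) = -(ι Q m * involute x) := by
  rw [map_mul, involute_ι, neg_mul]

theorem involute_contractLeft (φ : Module.Dual R M) (x : CliffordAlgebra Q) :
    involute (contractLeft φ x) = -contractLeft φ (involute x) := by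
  induction x using left_induction with
  | algebraMap r => simp only [contractLeft_algebraMap, AlgHom.commutes, map_zero, neg_zero]
  | add x y hx hy => rw [map_add, map_add, hx, hy, map_add, map_add, neg_add]
  | ι_mul x m hx =>
    rw [contractLeft_ι_mul, involute_ι_mul, map_neg, contractLeft_ι_mul, map_sub, map_smul,
      involute_ι_mul, hx, mul_neg, neg_neg, neg_neg]

end CliffordAlgebra

open CliffordAlgebra in
/-- T-duality intertwines the Clifford action of `a = (φ, f, w, g)` with that of its
T-dual `μ(a) = −(φ, g, w, f)`:  `T(c(φ,f,w,g) x) = −c(φ,g,w,f)(T x)`. -/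
theorem fmTransform_cliffordAction {R : Type*} [CommRing R] {W : Type*} [AddCommGroup W]
    [Module R W] (φ : Module.Dual R W) (w : W) (f g : R)
    (x : ExteriorAlgebra R W × ExteriorAlgebra R W) :
    fmTransform (cliffordAction φ f w g x) = -cliffordAction φ g w f (fmTransform x) := by
  ext
  · simp only [fmTransform, cliffordAction, Prod.fst_neg, map_add, map_neg, map_smul,
      involute_involute, involute_contractLeft, ExteriorAlgebra.ι, involute_ι_mul, mul_neg,
      smul_neg]
    abel
  · simp only [fmTransform, cliffordAction, Prod.snd_neg, map_add, map_neg, map_smul,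
      involute_involute, involute_contractLeft, ExteriorAlgebra.ι, involute_ι_mul, mul_neg,
      smul_neg]
end

section
/- Let R be a commutative ring, W an R-module, Λ(W) the exterior algebra of W, Γ the grade involution of Λ(W) (the algebra automorphism with Γ(w) = −w for w ∈ W), ι_φ the left contraction of Λ(W) by a dual element φ ∈ W*, and w∧ left exterior multiplication by w ∈ W. For a quadruple a = (φ, f, w, g) with φ ∈ W*, w ∈ W, f, g ∈ R, define the R-linear operator c(a) on Λ(W) ⊕ Λ(W) by c(a)(ω₁, ω₀) = (ι_φ ω₁ + w∧ω₁ + f·Γω₀ , ι_φ ω₀ + w∧ω₀ + g·Γω₁). Then for any two quadruples a = (φ, f, w, g) and b = (φ', f', w', g'), the anticommutator satisfies c(a)∘c(b) + c(b)∘c(a) = (φ(w') + φ'(w) + f·g' + g·f')·id on Λ(W) ⊕ Λ(W). -/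
open ExteriorAlgebra

lemma involute_contractLeft {R : Type*} [CommRing R] {W : Type*} [AddCommGroup W]
    [Module R W] {Q : QuadraticForm R W} (d : Module.Dual R W) (x : CliffordAlgebra Q) :
    CliffordAlgebra.involute (CliffordAlgebra.contractLeft d x)
      = -(CliffordAlgebra.contractLeft d (CliffordAlgebra.involute x)) := by
  induction' x using CliffordAlgebra.left_induction with r x y hx hy m x hx
  · simp [CliffordAlgebra.contractLeft_algebraMap]
  · simp only [map_add, hx, hy]; abel
  · simp only [map_sub, map_smul, map_mul, CliffordAlgebra.involute_ι, hx, neg_mul,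
      mul_neg, neg_neg, map_neg, CliffordAlgebra.contractLeft_ι_mul]

/-- The anticommutator of the Clifford actions of two quadruples `a = (φ, f, w, g)` and
`b = (φ', f', w', g')` equals the Courant pairing
`φ(w') + φ'(w) + f·g' + g·f'` times the identity. -/
theorem cliffordAction_anticommutator {R : Type*} [CommRing R] {W : Type*} [AddCommGroup W]
    [Module R W] (φ φ' : Module.Dual R W) (w w' : W) (f g f' g' : R)
    (x : ExteriorAlgebra R W × ExteriorAlgebra R W) :
    cliffordAction φ f w g (cliffordAction φ' f' w' g' x)
      + cliffordAction φ' f' w' g' (cliffordAction φ f w g x)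
      = (φ w' + φ' w + f * g' + g * f') • x := by
  obtain ⟨x1, x2⟩ := x
  simp only [cliffordAction, Prod.mk_add_mk, Prod.smul_mk, Prod.mk.injEq]
  constructor <;>
  · simp only [map_add, map_smul, map_mul, mul_add, smul_add,
      CliffordAlgebra.contractLeft_ι_mul, CliffordAlgebra.involute_involute,
      CliffordAlgebra.involute_ι, involute_contractLeft, map_neg, smul_neg, mul_neg,
      neg_mul, mul_smul_comm, add_smul]
    rw [CliffordAlgebra.contractLeft_comm (d := φ) (d' := φ')]
    have h1 : ι R w * (ι R w' * x1) = -(ι R w' * (ι R w * x1)) := by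
      rw [← mul_assoc, ← mul_assoc, eq_neg_iff_add_eq_zero, ← add_mul, ι_add_mul_swap, zero_mul]
    have h2 : ι R w * (ι R w' * x2) = -(ι R w' * (ι R w * x2)) := by
      rw [← mul_assoc, ← mul_assoc, eq_neg_iff_add_eq_zero, ← add_mul, ι_add_mul_swap, zero_mul]
    have hι : (CliffordAlgebra.ι (0 : QuadraticForm R W)) = ι R := rfl
    simp only [hι, h1, h2]
    module
end

section
/- Let K be a commutative ring, R a commutative K-algebra, and E an R-module equipped with: a symmetric R-bilinear pairing ⟨·,·⟩ : E × E → R which is nondegenerate (if ⟨x, c⟩ = 0 for all c ∈ E then x = 0), a K-bilinear bracket [·,·] : E × E → E, and a map ρ assigning to each a ∈ E a K-linear derivation ρ(a) : R → R. If the invariance axiom ρ(a)⟨b, c⟩ = ⟨[a, b], c⟩ + ⟨b, [a, c]⟩ holds for all a, b, c ∈ E, then the Leibniz rule [a, h•b] = ρ(a)(h)•b + h•[a, b] holds for all a, b ∈ E and all h ∈ R. -/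
/-- Redundancy of the Leibniz axiom (3) of a Courant algebroid: if the pairing is
symmetric, `R`-bilinear and nondegenerate, the anchor `ρ` takes values in derivations
of `R`, and the invariance axiom (5) `ρ(a)⟨b,c⟩ = ⟨[a,b],c⟩ + ⟨b,[a,c]⟩` holds, then
`[a, h•b] = ρ(a)(h)•b + h•[a,b]`. -/
theorem courant_axiom3_redundant {K : Type*} [CommRing K] {R : Type*} [CommRing R]
    [Algebra K R] {E : Type*} [AddCommGroup E] [Module R E] [Module K E]
    [IsScalarTower K R E]
    (B : E →ₗ[R] E →ₗ[R] R)
    (hsymm : ∀ x y : E, B x y = B y x)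
    (hnd : ∀ x : E, (∀ c : E, B x c = 0) → x = 0)
    (br : E → E → E)
    (hbr_addl : ∀ a a' b : E, br (a + a') b = br a b + br a' b)
    (hbr_addr : ∀ a b b' : E, br a (b + b') = br a b + br a b')
    (hbr_smull : ∀ (k : K) (a b : E), br (k • a) b = k • br a b)
    (hbr_smulr : ∀ (k : K) (a b : E), br a (k • b) = k • br a b)
    (ρ : E → Derivation K R R)
    (hinv : ∀ a b c : E, ρ a (B b c) = B (br a b) c + B b (br a c)) :
    ∀ (a b : E) (h : R), br a (h • b) = ρ a h • b + h • br a b := by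
  intro a b h
  have key : ∀ c : E, B (br a (h • b) - (ρ a h • b + h • br a b)) c = 0 := by
    intro c
    have h1 := hinv a (h • b) c
    have h2 := hinv a b c
    have hs : B (h • b) c = h * B b c := by simp
    rw [hs, Derivation.leibniz, h2, smul_eq_mul, smul_eq_mul] at h1
    simp only [map_sub, map_add, LinearMap.sub_apply, LinearMap.add_apply,
      LinearMap.map_smul, LinearMap.smul_apply, smul_eq_mul]
    have h3 : B (br a (h • b)) c = ρ a h * B b c + h * B (br a b) c := by
      have : B (h • b) (br a c) = h * B b (br a c) := by simp
      rw [this] at h1; linear_combination -h1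
    rw [h3]; ring
  exact sub_eq_zero.mp (hnd _ key)
end
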